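/- (Proposition 9, first claim: unidentifiability of every state-based effect without state constraints.) There exist finite state spaces for the variables (one may take A, C, X, F, Y binary, B with three states among which b₀ ≠ b₁, D and E with four states each, and c₀ a state of C) and two models, i.e., two tuples of stochastic CPTs, both satisfying the conditional functional dependencies [A, B=b₀] → D, [C, B=b₁] → E, and [A, C=c₀] → G (f_D(·|a,b₀) ∈ {0,1} for every a; f_E(·|b₁,c) ∈ {0,1} for every c; f_G(·|a,c₀) ∈ {0,1} for every a), such that the induced observational distributions are equal and strictly positive, Pr¹ = Pr² > 0 on all instantiations of (A,B,C,F,X,Y), yet for EVERY triple of states (c, x, y) one has Pr¹_{C=c,X=x}(Y=y) ≠ Pr²_{C=c,X=x}(Y=y), where Pr_{C=c,X=x}(Y=y) := ∑_{b} Pr_{C=c,X=x}(Y=y, B=b). -/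

import Mathlib

/-- A distribution over a finite type: nonnegative and sums to one. -/
def IsDist {Z : Type*} [Fintype Z] (f : Z → ℝ) : Prop :=
  (∀ z, 0 ≤ f z) ∧ ∑ z, f z = 1

/-- A stochastic CPT: nonnegative and each row sums to one. -/
def IsCPT {P Z : Type*} [Fintype Z] (f : P → Z → ℝ) : Prop :=
  (∀ p z, 0 ≤ f p z) ∧ ∀ p, ∑ z, f p z = 1

/-- Observational distribution of the extended hospital graph. -/
noncomputable def ehospPr {A B C D E F G X Y : Type*}
    [Fintype D] [Fintype E] [Fintype G]
    (fA : A → ℝ) (fB : B → ℝ) (fC : C → ℝ) (fD : A × B → D → ℝ)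
    (fE : B × C → E → ℝ) (fG : A × C → G → ℝ) (fF : D × E → F → ℝ)
    (fX : D × G → X → ℝ) (fY : X × E × F × G → Y → ℝ)
    (a : A) (b : B) (c : C) (φ : F) (x : X) (y : Y) : ℝ :=
  ∑ d, ∑ e, ∑ γ, fA a * fB b * fC c * fD (a, b) d * fE (b, c) e * fG (a, c) γ
    * fF (d, e) φ * fX (d, γ) x * fY (x, e, φ, γ) y

/-- Interventional quantity of the extended hospital graph (intervening
`C = c` and `X = x`). -/
noncomputable def ehospInt {A B C D E F G X Y : Type*}
    [Fintype A] [Fintype D] [Fintype E] [Fintype F] [Fintype G]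
    (fA : A → ℝ) (fB : B → ℝ) (fD : A × B → D → ℝ)
    (fE : B × C → E → ℝ) (fG : A × C → G → ℝ) (fF : D × E → F → ℝ)
    (fY : X × E × F × G → Y → ℝ) (c : C) (x : X) (y : Y) (b : B) : ℝ :=
  ∑ a, ∑ d, ∑ e, ∑ φ, ∑ γ, fA a * fB b * fD (a, b) d * fE (b, c) e
    * fG (a, c) γ * fF (d, e) φ * fY (x, e, φ, γ) y

/-! ### Explicit construction

Both models share every CPT except the one for `Y`.  The hidden variables
`D` and `E` are independent given `B`; `G` is trivial (one state).  The
perturbation `tw` of the `Y`-CPT is chosen orthogonal to the observational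
weights, so observational distributions agree, while the interventional
weights are not orthogonal to it. -/

noncomputable section EHospModel

/-- `fA = fC`: uniform on two states. -/
def mA : Fin 2 → ℝ := fun _ => 1/2
/-- `fB`: uniform on three states. -/
def mB : Fin 3 → ℝ := fun _ => 1/3
/-- `fD(·|a,b)`: depends only on `b`; the row `b = 0` is deterministic. -/
def mD : Fin 2 × Fin 3 → Fin 4 → ℝ :=
  fun p => ![![1, 0, 0, 0], ![1/4, 1/4, 1/4, 1/4], ![1/2, 1/6, 1/6, 1/6]] p.2
/-- `fE(·|b,c)`: depends only on `b`; the row `b = 1` is deterministic. -/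
def mE : Fin 3 × Fin 2 → Fin 4 → ℝ :=
  fun p => ![![1/2, 1/6, 1/6, 1/6], ![1, 0, 0, 0], ![1/6, 1/2, 1/6, 1/6]] p.1
/-- `fG`: the hidden variable `G` has a single state. -/
def mG : Fin 2 × Fin 2 → Fin 1 → ℝ := fun _ _ => 1
/-- Success probabilities for `F` given `(d, e)`. -/
def tF : Fin 4 → Fin 4 → ℝ :=
  ![![1/2, 1/4, 1/2, 3/4], ![1/4, 1/2, 3/4, 1/2],
    ![1/2, 3/4, 1/2, 1/4], ![3/4, 1/2, 1/4, 1/2]]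
def mF : Fin 4 × Fin 4 → Fin 2 → ℝ := fun p => ![1 - tF p.1 p.2, tF p.1 p.2]
/-- Success probabilities for `X` given `d`. -/
def tX : Fin 4 → ℝ := ![1/4, 1/2, 1/2, 3/4]
def mX : Fin 4 × Fin 1 → Fin 2 → ℝ := fun p => ![1 - tX p.1, tX p.1]
/-- Model `g`'s CPT for `Y`: a fair coin. -/
def mYg : Fin 2 × Fin 4 × Fin 2 × Fin 1 → Fin 2 → ℝ := fun _ => ![1/2, 1/2]
/-- The perturbation `tw x φ e`, orthogonal to all observational weights. -/
def tw : Fin 2 → Fin 2 → Fin 4 → ℝ :=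
  ![![![0, -5/1000, -14/1000, 43/1000], ![0, 17/1000, -154/1000, 97/1000]],
    ![![0, -17/1000, -6/1000, 63/1000], ![0, 3/1000, -30/1000, 19/1000]]]
/-- Model `h`'s CPT for `Y`: the perturbed coin. -/
def mYh : Fin 2 × Fin 4 × Fin 2 × Fin 1 → Fin 2 → ℝ :=
  fun p => ![1/2 - tw p.1 p.2.2.1 p.2.1, 1/2 + tw p.1 p.2.2.1 p.2.1]

end EHospModel

lemma mA_dist : IsDist mA := by
  constructor
  · intro z; norm_num [mA]
  · norm_num [mA, Fin.sum_univ_two]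

lemma mB_dist : IsDist mB := by
  constructor
  · intro z; norm_num [mB]
  · norm_num [mB, Fin.sum_univ_three]

lemma mD_cpt : IsCPT mD := by
  constructor
  · rintro ⟨a, b⟩ z; fin_cases b <;> fin_cases z <;> norm_num [mD]
  · rintro ⟨a, b⟩; fin_cases b <;> norm_num [mD, Fin.sum_univ_four, Matrix.cons_val_two, Matrix.cons_val_three]

lemma mE_cpt : IsCPT mE := by
  constructor
  · rintro ⟨b, c⟩ z; fin_cases b <;> fin_cases z <;> norm_num [mE]
  · rintro ⟨b, c⟩; fin_cases b <;> norm_num [mE, Fin.sum_univ_four, Matrix.cons_val_two, Matrix.cons_val_three]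

lemma mG_cpt : IsCPT mG := by
  constructor
  · intro p z; norm_num [mG]
  · intro p; norm_num [mG, Fin.sum_univ_one]

lemma mF_cpt : IsCPT mF := by
  constructor
  · rintro ⟨d, e⟩ z
    fin_cases d <;> fin_cases e <;> fin_cases z <;> norm_num [mF, tF]
  · rintro ⟨d, e⟩; simp [mF, Fin.sum_univ_two]

lemma mX_cpt : IsCPT mX := by
  constructor
  · rintro ⟨d, γ⟩ z; fin_cases d <;> fin_cases z <;> norm_num [mX, tX]
  · rintro ⟨d, γ⟩; simp [mX, Fin.sum_univ_two]

lemma mYg_cpt : IsCPT mYg := by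
  constructor
  · intro p z; fin_cases z <;> norm_num [mYg]
  · intro p; norm_num [mYg, Fin.sum_univ_two]

lemma mYh_cpt : IsCPT mYh := by
  constructor
  · rintro ⟨x, e, φ, γ⟩ z
    fin_cases x <;> fin_cases e <;> fin_cases φ <;> fin_cases z <;>
      norm_num [mYh, tw]
  · rintro ⟨x, e, φ, γ⟩
    simp only [mYh, Fin.sum_univ_two, Matrix.cons_val_zero, Matrix.cons_val_one,
      Matrix.head_cons]
    ring

set_option maxHeartbeats 2000000 in
lemma obs_eq : ∀ a b c φ x y,
    ehospPr mA mB mA mD mE mG mF mX mYg a b c φ x y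
      = ehospPr mA mB mA mD mE mG mF mX mYh a b c φ x y := by
  intro a b c φ x y
  fin_cases b <;> fin_cases φ <;> fin_cases x <;> fin_cases y <;>
    norm_num [ehospPr, mA, mB, mD, mE, mG, mF, mX, mYg, mYh, tF, tX, tw,
      Fin.sum_univ_four, Fin.sum_univ_two, Fin.sum_univ_one, Matrix.cons_val_two, Matrix.cons_val_three]

set_option maxHeartbeats 2000000 in
lemma obs_pos : ∀ a b c φ x y,
    0 < ehospPr mA mB mA mD mE mG mF mX mYg a b c φ x y := by
  intro a b c φ x y
  fin_cases b <;> fin_cases φ <;> fin_cases x <;> fin_cases y <;>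
    norm_num [ehospPr, mA, mB, mD, mE, mG, mF, mX, mYg, tF, tX,
      Fin.sum_univ_four, Fin.sum_univ_two, Fin.sum_univ_one, Matrix.cons_val_two, Matrix.cons_val_three]

set_option maxHeartbeats 2000000 in
lemma int_ne : ∀ (c x y : Fin 2),
    (∑ b, ehospInt mA mB mD mE mG mF mYg c x y b)
      ≠ (∑ b, ehospInt mA mB mD mE mG mF mYh c x y b) := by
  intro c x y
  fin_cases x <;> fin_cases y <;>
    norm_num [ehospInt, mA, mB, mD, mE, mG, mF, mYg, mYh, tF, tw,
      Fin.sum_univ_four, Fin.sum_univ_three, Fin.sum_univ_two, Fin.sum_univ_one,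
        Matrix.cons_val_two, Matrix.cons_val_three]

/-- Proposition 9, first claim: without state constraints, EVERY state-based
causal effect is unidentifiable.  With `A, C, X, F, Y` binary, `B` with three
states, `D, E` with four states each, and a finite state space `Fin (n+1)` for
the hidden variable `G`, there are two models (CPTs `g…` and `h…`) satisfying
the CFDs `[A, B=b₀] → D`, `[C, B=b₁] → E` and `[A, C=c₀] → G` that induce the
same strictly positive observational distribution yet disagree on
`Pr_{C=c,X=x}(Y=y) = ∑_b Pr_{C=c,X=x}(Y=y, B=b)` for every triple `(c, x, y)`. -/
theorem ehospital_all_states_unidentifiable :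
    ∃ (n : ℕ) (b₀ b₁ : Fin 3), b₀ ≠ b₁ ∧
    ∃ (c₀ : Fin 2)
      (gA hA gC hC : Fin 2 → ℝ) (gB hB : Fin 3 → ℝ)
      (gD hD : Fin 2 × Fin 3 → Fin 4 → ℝ)
      (gE hE : Fin 3 × Fin 2 → Fin 4 → ℝ)
      (gG hG : Fin 2 × Fin 2 → Fin (n + 1) → ℝ)
      (gF hF : Fin 4 × Fin 4 → Fin 2 → ℝ)
      (gX hX : Fin 4 × Fin (n + 1) → Fin 2 → ℝ)
      (gY hY : Fin 2 × Fin 4 × Fin 2 × Fin (n + 1) → Fin 2 → ℝ),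
      IsDist gA ∧ IsDist hA ∧ IsDist gB ∧ IsDist hB ∧ IsDist gC ∧ IsDist hC ∧
      IsCPT gD ∧ IsCPT hD ∧ IsCPT gE ∧ IsCPT hE ∧ IsCPT gG ∧ IsCPT hG ∧
      IsCPT gF ∧ IsCPT hF ∧ IsCPT gX ∧ IsCPT hX ∧ IsCPT gY ∧ IsCPT hY ∧
      (∀ (a : Fin 2) (d : Fin 4), gD (a, b₀) d = 0 ∨ gD (a, b₀) d = 1) ∧
      (∀ (a : Fin 2) (d : Fin 4), hD (a, b₀) d = 0 ∨ hD (a, b₀) d = 1) ∧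
      (∀ (c : Fin 2) (e : Fin 4), gE (b₁, c) e = 0 ∨ gE (b₁, c) e = 1) ∧
      (∀ (c : Fin 2) (e : Fin 4), hE (b₁, c) e = 0 ∨ hE (b₁, c) e = 1) ∧
      (∀ (a : Fin 2) (γ : Fin (n + 1)), gG (a, c₀) γ = 0 ∨ gG (a, c₀) γ = 1) ∧
      (∀ (a : Fin 2) (γ : Fin (n + 1)), hG (a, c₀) γ = 0 ∨ hG (a, c₀) γ = 1) ∧
      (∀ a b c φ x y, ehospPr gA gB gC gD gE gG gF gX gY a b c φ x y
                        = ehospPr hA hB hC hD hE hG hF hX hY a b c φ x y) ∧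
      (∀ a b c φ x y, 0 < ehospPr gA gB gC gD gE gG gF gX gY a b c φ x y) ∧
      ∀ c x y, (∑ b, ehospInt gA gB gD gE gG gF gY c x y b)
                 ≠ (∑ b, ehospInt hA hB hD hE hG hF hY c x y b) := by
  refine ⟨0, 0, 1, by decide, 0, mA, mA, mA, mA, mB, mB, mD, mD, mE, mE,
    mG, mG, mF, mF, mX, mX, mYg, mYh,
    mA_dist, mA_dist, mB_dist, mB_dist, mA_dist, mA_dist,
    mD_cpt, mD_cpt, mE_cpt, mE_cpt, mG_cpt, mG_cpt,
    mF_cpt, mF_cpt, mX_cpt, mX_cpt, mYg_cpt, mYh_cpt,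
    ?_, ?_, ?_, ?_, ?_, ?_, obs_eq, obs_pos, int_ne⟩
  · intro a d; fin_cases d <;> norm_num [mD]
  · intro a d; fin_cases d <;> norm_num [mD]
  · intro c e; fin_cases e <;> norm_num [mE]
  · intro c e; fin_cases e <;> norm_num [mE]
  · intro a γ; right; rfl
  · intro a γ; right; rfl
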